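/- arXiv:2405.08135 — 2 statements merged into one kernel-verified Lean document; each statement's English description precedes it below -/
import Mathlib

section
/- Let P be a finite set partitioned into m parts each of size c, let r ∈ (1/2,1) with rc ∈ ℤ, and let 𝕼 be a family of sets of parts with minimum pairwise intersection slash(𝕼). Define 𝒬 = 𝔓_r(𝕼) as the family of subsets S of P such that for some 𝒮 ∈ 𝕼, S contains at least rc elements of each part of 𝒮. Then the minimum pairwise intersection of 𝒬 satisfies slash(𝒬) = (2r−1)·c·slash(𝕼). -/
/-!
Write `t = r c`. If `S` and `T` both contain at least `t` of the `c` elements of a part `X`, then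
by inclusion–exclusion they share at least `2t - c` elements of `X`; summing over the common parts
of their witnesses gives `|S ∩ T| ≥ (2t - c) · slash(𝕼)`. Conversely, put into `S` exactly `t`
elements of each part of `𝒮` and into `T` exactly `t` elements of each part of `𝒯`, chosen so that
the two choices overlap in exactly `2t - c` elements; for `𝒮, 𝒯` realising `slash(𝕼)` this is an
equality.
-/

open Finset

namespace Finset

variable {α : Type*} [DecidableEq α]

/-- `slash(𝒜)` of the paper is the least element of this set. -/
def intersectionSizes (𝒜 : Set (Finset α)) : Set ℕ :=
  {m | ∃ A ∈ 𝒜, ∃ B ∈ 𝒜, #(A ∩ B) = m}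

/-- The family `𝔓_r(𝕼)` of the paper, with the threshold `r c` given as the natural number `t`. -/
def thresholdFamily (𝕼 : Set (Finset (Finset α))) (t : ℕ) : Set (Finset α) :=
  {S | ∃ 𝒮 ∈ 𝕼, ∀ X ∈ 𝒮, t ≤ #(S ∩ X)}

theorem card_add_card_le_card_inter_add_card {A B X : Finset α} (hA : A ⊆ X) (hB : B ⊆ X) :
    #A + #B ≤ #(A ∩ B) + #X := by
  rw [← card_union_add_card_inter, add_comm]
  exact Nat.add_le_add_left (card_le_card (union_subset hA hB)) _

theorem two_mul_sub_card_le_card_inter_inter {S T X : Finset α} {t : ℕ}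
    (hS : t ≤ #(S ∩ X)) (hT : t ≤ #(T ∩ X)) : 2 * t - #X ≤ #(S ∩ T ∩ X) := by
  have := card_add_card_le_card_inter_add_card (inter_subset_right : S ∩ X ⊆ X)
    (inter_subset_right : T ∩ X ⊆ X)
  rw [← inter_inter_distrib_right] at this
  omega

theorem exists_subsets_card_eq_inter_card_eq {X : Finset α} {t : ℕ}
    (htX : t ≤ #X) (hXt : #X ≤ 2 * t) :
    ∃ A ⊆ X, ∃ B ⊆ X, #A = t ∧ #B = t ∧ #(A ∩ B) = 2 * t - #X := by
  obtain ⟨A, hAX, hA⟩ := exists_subset_card_eq htX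
  obtain ⟨I, hIA, hI⟩ := exists_subset_card_eq (show 2 * t - #X ≤ #A by omega)
  have hdisj : Disjoint I (X \ A) := disjoint_sdiff.mono_left hIA
  have hinter : A ∩ (I ∪ X \ A) = I := by
    rw [inter_union_distrib_left, inter_sdiff_self, union_empty, inter_eq_right.mpr hIA]
  refine ⟨A, hAX, I ∪ X \ A, union_subset (hIA.trans hAX) sdiff_subset, hA, ?_, by rw [hinter, hI]⟩
  rw [card_union_of_disjoint hdisj, hI, card_sdiff_of_subset hAX, hA]
  omega

theorem biUnion_mem_thresholdFamily {𝕼 : Set (Finset (Finset α))} {𝒮 : Finset (Finset α)}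
    {t : ℕ} (h𝒮 : 𝒮 ∈ 𝕼) {A : Finset α → Finset α} (hA : ∀ X ∈ 𝒮, A X ⊆ X ∧ #(A X) = t) :
    𝒮.biUnion A ∈ thresholdFamily 𝕼 t :=
  ⟨𝒮, h𝒮, fun X hX => (hA X hX).2 ▸
    card_le_card (subset_inter (subset_biUnion_of_mem A hX) (hA X hX).1)⟩

variable {𝒞 : Finset (Finset α)}

theorem sum_card_inter_le_card (hpart : (𝒞 : Set (Finset α)).PairwiseDisjoint id) (S : Finset α) :
    ∑ X ∈ 𝒞, #(S ∩ X) ≤ #S := by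
  rw [← card_biUnion (t := (S ∩ ·)) fun X hX Y hY hne =>
    (hpart hX hY hne).mono inter_subset_right inter_subset_right]
  exact card_le_card (biUnion_subset.mpr fun _ _ => inter_subset_left)

theorem biUnion_inter_biUnion (hpart : (𝒞 : Set (Finset α)).PairwiseDisjoint id)
    {𝒮 𝒯 : Finset (Finset α)} (h𝒮 : 𝒮 ⊆ 𝒞) (h𝒯 : 𝒯 ⊆ 𝒞)
    {A B : Finset α → Finset α} (hA : ∀ X ∈ 𝒮, A X ⊆ X) (hB : ∀ X ∈ 𝒯, B X ⊆ X) :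
    𝒮.biUnion A ∩ 𝒯.biUnion B = (𝒮 ∩ 𝒯).biUnion fun X => A X ∩ B X := by
  ext p
  simp only [mem_inter, mem_biUnion]
  constructor
  · rintro ⟨⟨X, hX, hpA⟩, Y, hY, hpB⟩
    obtain rfl : X = Y := by
      by_contra hne
      exact disjoint_left.mp (hpart (h𝒮 hX) (h𝒯 hY) hne) (hA X hX hpA) (hB Y hY hpB)
    exact ⟨X, ⟨hX, hY⟩, hpA, hpB⟩
  · rintro ⟨X, ⟨hX𝒮, hX𝒯⟩, hpA, hpB⟩
    exact ⟨⟨X, hX𝒮, hpA⟩, X, hX𝒯, hpB⟩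

theorem mul_card_inter_le_card_inter (hpart : (𝒞 : Set (Finset α)).PairwiseDisjoint id)
    {c t : ℕ} (hsize : ∀ X ∈ 𝒞, #X = c) {𝒮 𝒯 : Finset (Finset α)} (h𝒮 : 𝒮 ⊆ 𝒞)
    {S T : Finset α} (hS : ∀ X ∈ 𝒮, t ≤ #(S ∩ X)) (hT : ∀ X ∈ 𝒯, t ≤ #(T ∩ X)) :
    (2 * t - c) * #(𝒮 ∩ 𝒯) ≤ #(S ∩ T) :=
  calc (2 * t - c) * #(𝒮 ∩ 𝒯) = ∑ _X ∈ 𝒮 ∩ 𝒯, (2 * t - c) := by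
        rw [sum_const, smul_eq_mul, mul_comm]
    _ ≤ ∑ X ∈ 𝒮 ∩ 𝒯, #(S ∩ T ∩ X) := sum_le_sum fun X hX => by
      rw [mem_inter] at hX
      simpa only [hsize X (h𝒮 hX.1)] using
        two_mul_sub_card_le_card_inter_inter (hS X hX.1) (hT X hX.2)
    _ ≤ #(S ∩ T) :=
      sum_card_inter_le_card (hpart.subset (coe_subset.mpr (inter_subset_left.trans h𝒮))) _

theorem isLeast_intersectionSizes_thresholdFamily
    (hpart : (𝒞 : Set (Finset α)).PairwiseDisjoint id) {c t : ℕ} (hsize : ∀ X ∈ 𝒞, #X = c)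
    (htc : t ≤ c) (hct : c ≤ 2 * t) {𝕼 : Set (Finset (Finset α))} (h𝕼𝒞 : ∀ 𝒮 ∈ 𝕼, 𝒮 ⊆ 𝒞)
    {s : ℕ} (hslash : IsLeast (intersectionSizes 𝕼) s) :
    IsLeast (intersectionSizes (thresholdFamily 𝕼 t)) ((2 * t - c) * s) := by
  constructor
  · obtain ⟨𝒮, h𝒮, 𝒯, h𝒯, rfl⟩ := hslash.1
    choose! A hAX B hBX hA hB hAB using fun X (hX : X ∈ 𝒞) =>
      exists_subsets_card_eq_inter_card_eq (hsize X hX ▸ htc) (hsize X hX ▸ hct)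
    have h𝒮𝒞 := h𝕼𝒞 𝒮 h𝒮
    have h𝒯𝒞 := h𝕼𝒞 𝒯 h𝒯
    have h𝒮𝒯 : 𝒮 ∩ 𝒯 ⊆ 𝒞 := inter_subset_left.trans h𝒮𝒞
    refine ⟨𝒮.biUnion A,
      biUnion_mem_thresholdFamily h𝒮 fun X hX => ⟨hAX X (h𝒮𝒞 hX), hA X (h𝒮𝒞 hX)⟩,
      𝒯.biUnion B,
      biUnion_mem_thresholdFamily h𝒯 fun X hX => ⟨hBX X (h𝒯𝒞 hX), hB X (h𝒯𝒞 hX)⟩, ?_⟩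
    have hdisj : ((𝒮 ∩ 𝒯 : Finset (Finset α)) : Set (Finset α)).PairwiseDisjoint
        fun X => A X ∩ B X :=
      (hpart.subset (coe_subset.mpr h𝒮𝒯)).mono_on fun X hX =>
        inter_subset_left.trans (hAX X (h𝒮𝒯 hX))
    rw [biUnion_inter_biUnion hpart h𝒮𝒞 h𝒯𝒞 (fun X hX => hAX X (h𝒮𝒞 hX))
      (fun X hX => hBX X (h𝒯𝒞 hX)), card_biUnion hdisj,
      sum_congr rfl fun X hX => by rw [hAB X (h𝒮𝒯 hX), hsize X (h𝒮𝒯 hX)],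
      sum_const, smul_eq_mul, mul_comm]
  · rintro _ ⟨S, ⟨𝒮, h𝒮, hS⟩, T, ⟨𝒯, h𝒯, hT⟩, rfl⟩
    exact (Nat.mul_le_mul_left _ (hslash.2 ⟨𝒮, h𝒮, 𝒯, h𝒯, rfl⟩)).trans
      (mul_card_inter_le_card_inter hpart hsize (h𝕼𝒞 𝒮 h𝒮) hS hT)

end Finset

theorem slash_P_r_general {P : Type*} [DecidableEq P]
    (𝒞 : Finset (Finset P)) (c t : ℕ) (r : ℚ)
    (hpart : (𝒞 : Set (Finset P)).PairwiseDisjoint id)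
    (hsize : ∀ X ∈ 𝒞, X.card = c)
    (hr : 1 / 2 < r) (hr1 : r < 1) (ht : (t : ℚ) = r * c)
    (𝕼 : Finset (Finset (Finset P)))
    (h𝕼𝒞 : ∀ 𝒮 ∈ 𝕼, 𝒮 ⊆ 𝒞)
    (slash𝕼 : ℕ)
    (hslash : IsLeast {m : ℕ | ∃ 𝒮 ∈ 𝕼, ∃ 𝒯 ∈ 𝕼, (𝒮 ∩ 𝒯).card = m} slash𝕼)
    (𝒬 : Set (Finset P))
    (h𝒬 : 𝒬 = {S : Finset P | ∃ 𝒮 ∈ 𝕼, ∀ X ∈ 𝒮, r * c ≤ ((S ∩ X).card : ℚ)}) :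
    IsLeast {x : ℚ | ∃ S ∈ 𝒬, ∃ T ∈ 𝒬, x = ((S ∩ T).card : ℚ)}
      ((2 * r - 1) * c * slash𝕼) := by
  have htc : t ≤ c := by exact_mod_cast (show (t : ℚ) ≤ c by rw [ht]; nlinarith)
  have hct : c ≤ 2 * t := by exact_mod_cast (show (c : ℚ) ≤ 2 * t by rw [ht]; nlinarith)
  have h𝒬t : 𝒬 = thresholdFamily 𝕼 t := by
    simp only [h𝒬, thresholdFamily, ← ht, Nat.cast_le]
    rfl
  have hsets : {x : ℚ | ∃ S ∈ 𝒬, ∃ T ∈ 𝒬, x = #(S ∩ T)} = Nat.cast '' intersectionSizes 𝒬 := by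
    ext x
    constructor
    · rintro ⟨S, hS, T, hT, rfl⟩
      exact ⟨_, ⟨S, hS, T, hT, rfl⟩, rfl⟩
    · rintro ⟨_, ⟨S, hS, T, hT, rfl⟩, rfl⟩
      exact ⟨S, hS, T, hT, rfl⟩
  have hvalue : (2 * r - 1) * c * slash𝕼 = (((2 * t - c) * slash𝕼 : ℕ) : ℚ) := by
    push_cast [Nat.cast_sub hct]
    rw [ht]
    ring
  rw [hsets, hvalue, h𝒬t]
  exact Nat.mono_cast.map_isLeast
    (isLeast_intersectionSizes_thresholdFamily hpart hsize htc hct h𝕼𝒞 hslash)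

/-- If 𝒞 partitions P into parts of size c, 1/2 < r < 1 with rc = t ∈ ℤ, 𝕼 a nonempty
family of sets of parts with minimum pairwise intersection slash𝕼, and
𝒬 = 𝔓_r(𝕼) is the family of subsets of P containing at least rc elements of each part
of some member of 𝕼, then the minimum pairwise intersection of 𝒬 is (2r−1)·c·slash𝕼. -/
theorem slash_P_r {P : Type*} [Fintype P] [DecidableEq P]
    (𝒞 : Finset (Finset P)) (c t : ℕ) (r : ℚ)
    (hpart : (𝒞 : Set (Finset P)).PairwiseDisjoint id)
    (hcover : 𝒞.sup id = Finset.univ)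
    (hsize : ∀ X ∈ 𝒞, X.card = c)
    (hr : 1 / 2 < r) (hr1 : r < 1) (ht : (t : ℚ) = r * c)
    (𝕼 : Finset (Finset (Finset P))) (h𝕼 : 𝕼.Nonempty)
    (h𝕼𝒞 : ∀ 𝒮 ∈ 𝕼, 𝒮 ⊆ 𝒞)
    (slash𝕼 : ℕ)
    (hslash : IsLeast {m : ℕ | ∃ 𝒮 ∈ 𝕼, ∃ 𝒯 ∈ 𝕼, (𝒮 ∩ 𝒯).card = m} slash𝕼)
    (𝒬 : Set (Finset P))
    (h𝒬 : 𝒬 = {S : Finset P | ∃ 𝒮 ∈ 𝕼, ∀ X ∈ 𝒮, r * c ≤ ((S ∩ X).card : ℚ)}) :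
    IsLeast {x : ℚ | ∃ S ∈ 𝒬, ∃ T ∈ 𝒬, x = ((S ∩ T).card : ℚ)}
      ((2 * r - 1) * c * slash𝕼) :=
  slash_P_r_general 𝒞 c t r hpart hsize hr hr1 ht 𝕼 h𝕼𝒞 slash𝕼 hslash 𝒬 h𝒬
end

section
/- Let 𝕼 be a finite nonempty family of subsets of a finite set 𝒞 with msg(𝕼)·load(𝕼) ≤ μ·λ, where msg(𝕼) is the maximum member size and load(𝕼) = max_C deg(C)/|𝕼|. Let P be partitioned into parts of size c indexed by 𝒞, r ∈ (1/2,1), rc ∈ ℤ. Then slash(𝔓_r(𝕼)) ≤ (2r−1)·c·μ·λ. -/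
/-!
Fix any `A ∈ 𝕼`. Double counting gives `∑_{B ∈ 𝕼} |A ∩ B| = ∑_{C ∈ A} deg C ≤ |A| · load · |𝕼|`,
so some `B ∈ 𝕼` has `|A ∩ B| ≤ msg · load ≤ μλ`. Inside each part of size `c` there are two
`rc`-subsets meeting in exactly `(2r - 1)c` points; placing them on the parts of `A` and of `B`
respectively gives two members of `𝔓_r(𝕼)` that can only meet inside the parts of `A ∩ B`.
-/

open Finset

namespace Finset

variable {α ι : Type*} [DecidableEq α]

theorem sum_card_inter_eq_sum_card_filter_mem (s : Finset α) (B : Finset (Finset α)) :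
    ∑ t ∈ B, #(s ∩ t) = ∑ a ∈ s, #{b ∈ B | a ∈ b} := by
  simp_rw [← filter_mem_eq_inter, card_eq_sum_ones, sum_filter]
  exact sum_comm

theorem exists_card_inter_le_card_mul {K : Type*} [CommRing K] [LinearOrder K]
    [IsStrictOrderedRing K] {𝕼 : Finset (Finset α)} {A : Finset α} (hA : A ∈ 𝕼) {ℓ : K}
    (hdeg : ∀ a ∈ A, (#{B ∈ 𝕼 | a ∈ B} : K) ≤ ℓ * #𝕼) :
    ∃ B ∈ 𝕼, (#(A ∩ B) : K) ≤ #A * ℓ := by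
  refine exists_le_of_sum_le ⟨A, hA⟩ ?_
  calc ∑ B ∈ 𝕼, (#(A ∩ B) : K) = ∑ a ∈ A, (#{B ∈ 𝕼 | a ∈ B} : K) := by
        exact_mod_cast sum_card_inter_eq_sum_card_filter_mem A 𝕼
    _ ≤ ∑ _a ∈ A, ℓ * #𝕼 := sum_le_sum hdeg
    _ = ∑ _B ∈ 𝕼, (#A : K) * ℓ := by simp only [sum_const, nsmul_eq_mul]; ring

theorem exists_subsets_card_eq_card_inter_eq {X : Finset α} {t : ℕ} (htX : t ≤ #X)
    (hXt : #X ≤ 2 * t) :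
    ∃ S ⊆ X, ∃ T ⊆ X, #S = t ∧ #T = t ∧ #(S ∩ T) = 2 * t - #X := by
  obtain ⟨S, hSX, hS⟩ := exists_subset_card_eq htX
  obtain ⟨U, hUS, hU⟩ := exists_subset_card_eq (show 2 * t - #X ≤ #S by omega)
  have hdisj : Disjoint (X \ S) U := sdiff_disjoint.mono_right hUS
  have hST : S ∩ (X \ S ∪ U) = U := by
    rw [inter_union_distrib_left, inter_sdiff_self, empty_union, inter_eq_right.2 hUS]
  refine ⟨S, hSX, X \ S ∪ U, union_subset sdiff_subset (hUS.trans hSX), hS, ?_, by rw [hST, hU]⟩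
  rw [card_union_of_disjoint hdisj, card_sdiff_of_subset hSX]
  omega

theorem biUnion_inter_biUnion_s15 [DecidableEq ι] {A B : Finset ι} {f g : ι → Finset α}
    (hfg : ∀ i ∈ A, ∀ j ∈ B, i ≠ j → Disjoint (f i) (g j)) :
    A.biUnion f ∩ B.biUnion g = (A ∩ B).biUnion fun i ↦ f i ∩ g i := by
  ext x
  simp only [mem_inter, mem_biUnion]
  constructor
  · rintro ⟨⟨i, hiA, hfi⟩, j, hjB, hgj⟩
    obtain rfl : i = j := by_contra fun hij ↦ disjoint_left.1 (hfg i hiA j hjB hij) hfi hgj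
    exact ⟨i, ⟨hiA, hjB⟩, hfi, hgj⟩
  · rintro ⟨i, ⟨hiA, hiB⟩, hfi, hgi⟩
    exact ⟨⟨i, hiA, hfi⟩, i, hiB, hgi⟩

theorem card_le_card_biUnion_inter [DecidableEq ι] {s : Finset ι} {f : ι → Finset α} {i : ι}
    {X : Finset α} (hi : i ∈ s) (hfi : f i ⊆ X) : #(f i) ≤ #(s.biUnion f ∩ X) :=
  card_le_card (subset_inter (subset_biUnion_of_mem f hi) hfi)

theorem exists_card_inter_ge_card_inter_le {𝒞 A B : Finset (Finset α)} {c t : ℕ}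
    (hpart : (𝒞 : Set (Finset α)).PairwiseDisjoint id) (hsize : ∀ X ∈ 𝒞, #X = c)
    (htc : t ≤ c) (hct : c ≤ 2 * t) (hA : A ⊆ 𝒞) (hB : B ⊆ 𝒞) :
    ∃ S T : Finset α, (∀ X ∈ A, t ≤ #(S ∩ X)) ∧ (∀ X ∈ B, t ≤ #(T ∩ X)) ∧
      #(S ∩ T) ≤ #(A ∩ B) * (2 * t - c) := by
  choose! Sf hSf Tf hTf hSt hTt hST using fun X hX ↦
    exists_subsets_card_eq_card_inter_eq (X := X) (t := t) (hsize X hX ▸ htc) (hsize X hX ▸ hct)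
  refine ⟨A.biUnion Sf, B.biUnion Tf,
    fun X hX ↦ hSt X (hA hX) ▸ card_le_card_biUnion_inter hX (hSf X (hA hX)),
    fun X hX ↦ hTt X (hB hX) ▸ card_le_card_biUnion_inter hX (hTf X (hB hX)), ?_⟩
  rw [biUnion_inter_biUnion_s15 fun X hX Y hY hXY ↦
    (hpart (hA hX) (hB hY) hXY).mono (hSf X (hA hX)) (hTf Y (hB hY))]
  refine card_biUnion_le_card_mul _ _ _ fun X hX ↦ ?_
  have hX𝒞 := hA (mem_inter.1 hX).1
  rw [hST X hX𝒞, hsize X hX𝒞]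

end Finset

theorem slash_upper_bound_general {P : Type*} [DecidableEq P]
    (𝒞set : Finset (Finset P)) (c t : ℕ) (r : ℚ)
    (hpart : (𝒞set : Set (Finset P)).PairwiseDisjoint id)
    (hsize : ∀ X ∈ 𝒞set, X.card = c)
    (hr : 1 / 2 < r) (hr1 : r < 1) (ht : (t : ℚ) = r * c)
    (𝕼 : Finset (Finset (Finset P))) (h𝕼 : 𝕼.Nonempty)
    (h𝕼𝒞 : ∀ 𝒮 ∈ 𝕼, 𝒮 ⊆ 𝒞set)
    (msg : ℕ) (hmsg : msg = 𝕼.sup Finset.card)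
    (load : ℚ)
    (hload : IsGreatest
      ((fun C => ((𝕼.filter fun Q => C ∈ Q).card : ℚ) / 𝕼.card) '' (𝒞set : Set (Finset P)))
      load)
    (μ lam : ℚ) (hmul : (msg : ℚ) * load ≤ μ * lam)
    (𝒬 : Set (Finset P))
    (h𝒬 : 𝒬 = {S : Finset P | ∃ 𝒮 ∈ 𝕼, ∀ X ∈ 𝒮, r * c ≤ ((S ∩ X).card : ℚ)}) :
    ∃ S ∈ 𝒬, ∃ T ∈ 𝒬, ((S ∩ T).card : ℚ) ≤ (2 * r - 1) * c * μ * lam := by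
  have htc : t ≤ c := by exact_mod_cast (show (t : ℚ) ≤ c by rw [ht]; nlinarith)
  have hct : c ≤ 2 * t := by exact_mod_cast (show (c : ℚ) ≤ 2 * t by rw [ht]; nlinarith)
  obtain ⟨A, hA⟩ := h𝕼
  have hload0 : 0 ≤ load := by
    obtain ⟨C, -, rfl⟩ := hload.1
    positivity
  obtain ⟨B, hB, hAB⟩ := exists_card_inter_le_card_mul hA (ℓ := load) fun C hC ↦
    (div_le_iff₀ (by exact_mod_cast card_pos.2 ⟨A, hA⟩)).1 (hload.2 ⟨C, h𝕼𝒞 A hA hC, rfl⟩)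
  have hABμ : (#(A ∩ B) : ℚ) ≤ μ * lam := calc
    _ ≤ #A * load := hAB
    _ ≤ msg * load := by gcongr; exact_mod_cast hmsg ▸ le_sup hA
    _ ≤ μ * lam := hmul
  obtain ⟨S, T, hS, hT, hST⟩ :=
    exists_card_inter_ge_card_inter_le hpart hsize htc hct (h𝕼𝒞 A hA) (h𝕼𝒞 B hB)
  refine ⟨S, h𝒬 ▸ ⟨A, hA, fun X hX ↦ ht ▸ by exact_mod_cast hS X hX⟩,
    T, h𝒬 ▸ ⟨B, hB, fun X hX ↦ ht ▸ by exact_mod_cast hT X hX⟩, ?_⟩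
  calc (#(S ∩ T) : ℚ) ≤ #(A ∩ B) * ((2 * t - c : ℕ) : ℚ) := by exact_mod_cast hST
    _ ≤ μ * lam * ((2 * t - c : ℕ) : ℚ) := by gcongr
    _ = (2 * r - 1) * c * μ * lam := by rw [Nat.cast_sub hct]; push_cast [ht]; ring

/-- If msg(𝕼)·load(𝕼) ≤ μ·λ, the parts have size c, and 1/2 < r < 1 with rc = t ∈ ℤ,
then slash(𝔓_r(𝕼)) ≤ (2r−1)·c·μ·λ, witnessed by a pair of quorums of small intersection. -/
theorem slash_upper_bound {P : Type*} [Fintype P] [DecidableEq P]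
    (𝒞set : Finset (Finset P)) (c t : ℕ) (r : ℚ)
    (hpart : (𝒞set : Set (Finset P)).PairwiseDisjoint id)
    (hcover : 𝒞set.sup id = Finset.univ)
    (hsize : ∀ X ∈ 𝒞set, X.card = c)
    (hr : 1 / 2 < r) (hr1 : r < 1) (ht : (t : ℚ) = r * c)
    (𝕼 : Finset (Finset (Finset P))) (h𝕼 : 𝕼.Nonempty)
    (h𝕼𝒞 : ∀ 𝒮 ∈ 𝕼, 𝒮 ⊆ 𝒞set)
    (msg : ℕ) (hmsg : msg = 𝕼.sup Finset.card)
    (load : ℚ)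
    (hload : IsGreatest
      ((fun C => ((𝕼.filter fun Q => C ∈ Q).card : ℚ) / 𝕼.card) '' (𝒞set : Set (Finset P)))
      load)
    (μ lam : ℚ) (hmul : (msg : ℚ) * load ≤ μ * lam)
    (𝒬 : Set (Finset P))
    (h𝒬 : 𝒬 = {S : Finset P | ∃ 𝒮 ∈ 𝕼, ∀ X ∈ 𝒮, r * c ≤ ((S ∩ X).card : ℚ)}) :
    ∃ S ∈ 𝒬, ∃ T ∈ 𝒬, ((S ∩ T).card : ℚ) ≤ (2 * r - 1) * c * μ * lam :=
  slash_upper_bound_general 𝒞set c t r hpart hsize hr hr1 ht 𝕼 h𝕼 h𝕼𝒞 msg hmsg load hload μ lam hmul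
    𝒬 h𝒬
end
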